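/- arXiv:1508.03764 — 2 statements merged into one kernel-verified Lean document; each statement's English description precedes it below -/
import Mathlib

section
/- Let A be a T-graded algebra over a field F where T is a finite set. Then for all n ∈ ℕ the graded codimension is bounded by c_n^{T-gr}(A) ≤ |T|^n · c_n(A). -/
open Filter Finset Submodule

noncomputable section

namespace PIExp

/-- The multiset of leaves (occurrences of generators) of a non-associative word. -/
def mleaves {α : Type} : FreeMagma α → Multiset α
  | .of a => {a}
  | .mul x y => mleaves x + mleaves y

variable (F : Type) [Field F] (S : Type)

/-- The absolutely free non-associative algebra on `X = {x_1, x_2, …}`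
with symbols from `S` (the generator `(i, s)` plays the role of `x_i^s`). -/
abbrev FreeNA : Type := FreeNonUnitalNonAssocAlgebra F (ℕ × S)

/-- A non-associative word in the generators, viewed inside the free algebra. -/
def embedMonomial : FreeMagma (ℕ × S) →ₙ* FreeNA F S :=
  FreeMagma.lift (FreeNonUnitalNonAssocAlgebra.of F)

/-- `Wn F S n` is the space of multilinear elements of degree `n` in `x_0, …, x_{n-1}`:
the span of all words `x_{σ(0)}^{s_0} ⋯ x_{σ(n-1)}^{s_{n-1}}` (all bracket arrangements). -/
def Wn (n : ℕ) : Submodule F (FreeNA F S) :=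
  Submodule.span F
    {f | ∃ w : FreeMagma (ℕ × S), (mleaves w).map Prod.fst = Multiset.range n ∧
      f = embedMonomial F S w}

/-- The substitution `x_i ↦ x_{g i}` (with the symbols untouched),
as an algebra endomorphism of the free algebra. -/
def relabelHom (g : ℕ → ℕ) : FreeNA F S →ₙₐ[F] FreeNA F S :=
  FreeNonUnitalNonAssocAlgebra.lift F
    (fun p : ℕ × S => FreeNonUnitalNonAssocAlgebra.of F (g p.1, p.2))

/-- `relabelHom` as a linear endomorphism. -/
def relabelL (g : ℕ → ℕ) : FreeNA F S →ₗ[F] FreeNA F S where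
  toFun := relabelHom F S g
  map_add' := map_add _
  map_smul' := map_smul _

variable {A : Type} [NonUnitalNonAssocSemiring A] [Module F A]
  [SMulCommClass F A A] [IsScalarTower F A A]

variable (A) in
/-- The ideal of polynomial `H`-identities of an algebra `A` with a generalized `H`-action:
all elements of the free algebra vanishing under every substitution `x_i^h ↦ h • ψ i`. -/
def IdH (H : Type) [Semiring H] [Module H A] : Submodule F (FreeNA F H) :=
  ⨅ ψ : ℕ → A,
    LinearMap.ker ((FreeNonUnitalNonAssocAlgebra.lift F (fun p : ℕ × H => p.2 • ψ p.1) :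
      FreeNA F H →ₙₐ[F] A) : FreeNA F H →ₗ[F] A)

variable (A) in
/-- The ideal of graded polynomial identities of a `T`-graded algebra
`A = ⊕_t comp t`: elements vanishing under all graded substitutions `x_i^{(t)} ↦ ψ (i,t) ∈ comp t`. -/
def IdGr (T : Type) (comp : T → Submodule F A) : Submodule F (FreeNA F T) :=
  ⨅ ψ : {ψ : ℕ × T → A // ∀ p, ψ p ∈ comp p.2},
    LinearMap.ker ((FreeNonUnitalNonAssocAlgebra.lift F (fun p : ℕ × T => ψ.1 p) :
      FreeNA F T →ₙₐ[F] A) : FreeNA F T →ₗ[F] A)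

variable (A) in
/-- The ideal of ordinary polynomial identities of `A` (the symbols are trivial). -/
def IdOrd : Submodule F (FreeNA F Unit) :=
  ⨅ ψ : ℕ → A,
    LinearMap.ker ((FreeNonUnitalNonAssocAlgebra.lift F (fun p : ℕ × Unit => ψ p.1) :
      FreeNA F Unit →ₙₐ[F] A) : FreeNA F Unit →ₗ[F] A)

/-- The `n`-th codimension attached to an ideal of identities `I`:
`dim (W_n / (W_n ∩ I))`, computed as the image of `W_n` in the quotient by `I`. -/
def codim (I : Submodule F (FreeNA F S)) (n : ℕ) : ℕ :=
  Module.finrank F ((Wn F S n).map I.mkQ)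

/-- The `n`-th codimension as a cardinal (for possibly infinite-dimensional situations). -/
def codimRank (I : Submodule F (FreeNA F S)) (n : ℕ) : Cardinal :=
  Module.rank F ((Wn F S n).map I.mkQ)

end PIExp
namespace PIExp

/-- The parts of a partition `p ⊢ n`, listed in non-increasing order:
`partFn p 0 = λ_1`, `partFn p 1 = λ_2`, … (`0` beyond the number of parts). -/
def partFn {n : ℕ} (p : Nat.Partition n) : ℕ → ℕ :=
  fun i => ((p.parts.sort (· ≤ ·)).reverse).getD i 0

/-- The cell (row, column) of the `k`-th box (0-indexed) in the canonical
row-by-row filling of the Young diagram with row lengths `lam`. -/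
def cellOf (lam : ℕ → ℕ) : ℕ → ℕ × ℕ
  | 0 => (0, 0)
  | k + 1 =>
      let c := cellOf lam k
      if c.2 + 1 < lam c.1 then (c.1, c.2 + 1) else (c.1 + 1, 0)

/-- The canonical Young tableau of shape `p`: the cell of each of the numbers `0, …, n-1`. -/
def canonT {n : ℕ} (p : Nat.Partition n) : Fin n → ℕ × ℕ :=
  fun m => cellOf (partFn p) (m : ℕ)

/-- A permutation of `Fin n` viewed as a map `ℕ → ℕ`. -/
def permNat {n : ℕ} (σ : Equiv.Perm (Fin n)) : ℕ → ℕ :=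
  fun i => if h : i < n then (σ ⟨i, h⟩ : ℕ) else i

/-- The row stabilizer `R_{T}` of a tableau `T` (given by the cell of each number). -/
def rowStab {n : ℕ} (Tb : Fin n → ℕ × ℕ) : Finset (Equiv.Perm (Fin n)) :=
  Finset.univ.filter fun π => ∀ m, (Tb (π m)).1 = (Tb m).1

/-- The column stabilizer `C_{T}` of a tableau `T`. -/
def colStab {n : ℕ} (Tb : Fin n → ℕ × ℕ) : Finset (Equiv.Perm (Fin n)) :=
  Finset.univ.filter fun π => ∀ m, (Tb (π m)).2 = (Tb m).2

variable (F : Type) [Field F] (S : Type)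

/-- The Young symmetrizer `e_T = a_T b_T = Σ_{π ∈ R_T} Σ_{σ ∈ C_T} (sign σ) πσ`, acting on the
free algebra by permutation of the variables. -/
def youngE {n : ℕ} (Tb : Fin n → ℕ × ℕ) : FreeNA F S →ₗ[F] FreeNA F S :=
  ∑ π ∈ rowStab Tb, ∑ σ ∈ colStab Tb,
    ((Equiv.Perm.sign σ : ℤ) : F) • relabelL F S (permNat (π * σ))

/-- The Young symmetrizer `e*_T = b_T a_T = Σ_{σ ∈ C_T} Σ_{π ∈ R_T} (sign σ) σπ`. -/
def youngEStar {n : ℕ} (Tb : Fin n → ℕ × ℕ) : FreeNA F S →ₗ[F] FreeNA F S :=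
  ∑ σ ∈ colStab Tb, ∑ π ∈ rowStab Tb,
    ((Equiv.Perm.sign σ : ℤ) : F) • relabelL F S (permNat (σ * π))

/-- The multiplicity `m(A, H, λ)` of the irreducible `S_n`-character `χ(λ)` in the `n`-th
cocharacter attached to the ideal of identities `I`; it equals
`dim e_{T_λ}·(W_n/(W_n ∩ I))`, computed here via the canonical tableau of shape `λ`. -/
def mult (I : Submodule F (FreeNA F S)) {n : ℕ} (p : Nat.Partition n) : ℕ :=
  Module.finrank F (((Wn F S n).map (youngE F S (canonT p))).map I.mkQ)

/-- The `n`-th colength `ℓ_n = Σ_{λ ⊢ n} m(A, H, λ)` attached to an ideal of identities `I`. -/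
def colength (I : Submodule F (FreeNA F S)) (n : ℕ) : ℕ :=
  ∑ p : Nat.Partition n, mult F S I p

/-- The function `Φ(x_1, …, x_s) = 1 / (x_1^{x_1} ⋯ x_s^{x_s})` (with `0^0 = 1`). -/
def Phi (s : ℕ) (x : Fin s → ℝ) : ℝ :=
  (∏ i, Real.rpow (x i) (x i))⁻¹

/-- `max { Φ(λ_1/n, …, λ_s/n) : λ ⊢ n, m(A,H,λ) ≠ 0 }`. -/
def maxPhi (s : ℕ) (I : Submodule F (FreeNA F S)) (n : ℕ) : ℝ :=
  sSup {r : ℝ | ∃ p : Nat.Partition n, mult F S I p ≠ 0 ∧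
    r = Phi s (fun i => (partFn p (i : ℕ) : ℝ) / (n : ℝ))}

/-- `d(A) = limsup_n max { Φ(λ_1/n, …, λ_s/n) : λ ⊢ n, m(A,H,λ) ≠ 0 }`. -/
def dVal (s : ℕ) (I : Submodule F (FreeNA F S)) : ℝ :=
  Filter.limsup (fun n : ℕ => maxPhi F S s I n) Filter.atTop

end PIExp
namespace PIExp

/-- `A` is an algebra with a generalized `H`-action: for every `h ∈ H` there exist
`h'_i, h''_i, h'''_i, h''''_i ∈ H` with
`h(ab) = Σ_i ((h'_i a)(h''_i b) + (h'''_i b)(h''''_i a))` for all `a, b ∈ A`. -/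
def IsGenAction (H A : Type) [Semiring H] [NonUnitalNonAssocSemiring A] [Module H A] : Prop :=
  ∀ h : H, ∃ (k : ℕ) (h₁ h₂ h₃ h₄ : Fin k → H), ∀ a b : A,
    h • (a * b) = ∑ i : Fin k, ((h₁ i • a) * (h₂ i • b) + (h₃ i • b) * (h₄ i • a))

/-- `A` is `H`-simple: `A² ≠ 0` and `A` has no `H`-invariant two-sided ideals
other than `0` and `A`. -/
def IsHSimple (F H A : Type) [Field F] [Semiring H] [NonUnitalNonAssocSemiring A]
    [Module F A] [Module H A] : Prop :=
  (∃ a b : A, a * b ≠ 0) ∧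
    ∀ I : Submodule F A,
      (∀ a : A, ∀ x ∈ I, a * x ∈ I) → (∀ a : A, ∀ x ∈ I, x * a ∈ I) →
      (∀ h : H, ∀ x ∈ I, h • x ∈ I) → I = ⊥ ∨ I = ⊤

/-- `comp : T → Submodule F A` is a grading of `A` by the set `T`:
`A = ⊕_{t ∈ T} A^{(t)}` and for all `s, t` there is `r` with `A^{(s)} A^{(t)} ⊆ A^{(r)}`. -/
def IsGrading (F T A : Type) [Field F] [NonUnitalNonAssocSemiring A] [Module F A]
    (comp : T → Submodule F A) : Prop :=
  iSupIndep comp ∧ (⨆ t, comp t) = ⊤ ∧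
    ∀ s t : T, ∃ r : T, ∀ a ∈ comp s, ∀ b ∈ comp t, a * b ∈ comp r

/-- A graded algebra is graded-simple: `A² ≠ 0` and the only graded two-sided ideals
are `0` and `A`. -/
def IsGradedSimple (F T A : Type) [Field F] [NonUnitalNonAssocSemiring A] [Module F A]
    (comp : T → Submodule F A) : Prop :=
  (∃ a b : A, a * b ≠ 0) ∧
    ∀ I : Submodule F A,
      (∀ a : A, ∀ x ∈ I, a * x ∈ I) → (∀ a : A, ∀ x ∈ I, x * a ∈ I) →
      (I = ⨆ t, I ⊓ comp t) → I = ⊥ ∨ I = ⊤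

end PIExp

/-!
Split a multilinear graded polynomial `f` of degree `n` by the multidegree `t : Fin n → T` of its
monomials and forget the grades: this gives ordinary multilinear polynomials `f_t`, and every graded
evaluation of `f` is the sum over `t` of ordinary evaluations of the `f_t`. So `f` is a graded
identity as soon as every `f_t` is an identity, and `W_n^{T-gr}` modulo graded identities is a
quotient of the image of `f ↦ (f_t)_t` in `|T|^n` copies of `W_n / (W_n ∩ Id(A))`.
-/

universe u

section

variable {K : Type*} {V M ι : Type u} {N : ι → Type u} [DivisionRing K]
  [AddCommGroup V] [Module K V] [AddCommGroup M] [Module K M]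
  [∀ i, AddCommGroup (N i)] [∀ i, Module K (N i)]

theorem Submodule.rank_map_le_sum_rank_map [Finite ι] (W : Submodule K V) (f : V →ₗ[K] M)
    (g : ∀ i, V →ₗ[K] N i) (h : ∀ x ∈ W, (∀ i, g i x = 0) → f x = 0) :
    Module.rank K (W.map f) ≤ Cardinal.sum fun i => Module.rank K (W.map (g i)) := by
  let G : W →ₗ[K] ∀ i, W.map (g i) := LinearMap.pi fun i => (g i).submoduleMap W
  have hker : LinearMap.ker G ≤ LinearMap.ker (f.submoduleMap W) := by
    intro x hx
    simp only [LinearMap.mem_ker, G, funext_iff, LinearMap.pi_apply, Pi.zero_apply,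
      Subtype.ext_iff, LinearMap.submoduleMap_coe_apply, ZeroMemClass.coe_zero] at hx ⊢
    exact h x x.2 hx
  calc Module.rank K (W.map f)
      = Module.rank K (W ⧸ LinearMap.ker (f.submoduleMap W)) :=
        (LinearMap.quotKerEquivOfSurjective _ (f.submoduleMap_surjective W)).rank_eq.symm
    _ ≤ Module.rank K (W ⧸ LinearMap.ker G) :=
        LinearMap.rank_le_of_surjective _ (Submodule.factor_surjective hker)
    _ = Module.rank K (LinearMap.range G) := (LinearMap.quotKerEquivRange G).rank_eq
    _ ≤ Module.rank K (∀ i, W.map (g i)) := Submodule.rank_le _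
    _ = Cardinal.sum fun i => Module.rank K (W.map (g i)) := rank_pi

end

namespace PIExp

open FreeNonUnitalNonAssocAlgebra

section Words

variable (F : Type) [Field F] {S : Type} {A : Type} [NonUnitalNonAssocSemiring A] [Module F A]
  [SMulCommClass F A A] [IsScalarTower F A A]

theorem mleaves_map {α β : Type} (f : α → β) (w : FreeMagma α) :
    mleaves (FreeMagma.map f w) = (mleaves w).map f := by
  induction w using FreeMagma.recOnMul with
  | ih1 a => rfl
  | ih2 x y ihx ihy => simp only [map_mul, mleaves, ihx, ihy, Multiset.map_add]

theorem lift_of_comp_embedMonomial {S' : Type} (g : ℕ × S → ℕ × S')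
    (w : FreeMagma (ℕ × S)) :
    lift F (fun p => of F (g p)) (embedMonomial F S w) =
      embedMonomial F S' (FreeMagma.map g w) := by
  induction w using FreeMagma.recOnMul with
  | ih1 p => exact lift_of_apply _ _ _
  | ih2 x y ihx ihy => simp only [map_mul, ihx, ihy]

theorem lift_indicator_embedMonomial_of_forall_mem {s : Set (ℕ × S)} (φ : ℕ × S → A)
    {w : FreeMagma (ℕ × S)} (hw : ∀ p ∈ mleaves w, p ∈ s) :
    lift F (s.indicator φ) (embedMonomial F S w) = lift F φ (embedMonomial F S w) := by
  induction w using FreeMagma.recOnMul with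
  | ih1 p =>
    simp only [embedMonomial, FreeMagma.lift_of, lift_of_apply]
    exact Set.indicator_of_mem (hw p (Multiset.mem_singleton_self p)) φ
  | ih2 x y ihx ihy =>
    simp only [map_mul]
    rw [ihx fun p hp => hw p (Multiset.mem_add.2 (.inl hp)),
      ihy fun p hp => hw p (Multiset.mem_add.2 (.inr hp))]

theorem lift_indicator_embedMonomial_of_exists_notMem {s : Set (ℕ × S)} (φ : ℕ × S → A)
    {w : FreeMagma (ℕ × S)} (hw : ∃ p ∈ mleaves w, p ∉ s) :
    lift F (s.indicator φ) (embedMonomial F S w) = 0 := by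
  induction w using FreeMagma.recOnMul with
  | ih1 p =>
    obtain ⟨q, hq, hqs⟩ := hw
    rw [mleaves, Multiset.mem_singleton] at hq
    subst hq
    simp only [embedMonomial, FreeMagma.lift_of, lift_of_apply]
    exact Set.indicator_of_notMem hqs φ
  | ih2 x y ihx ihy =>
    obtain ⟨q, hq, hqs⟩ := hw
    rcases Multiset.mem_add.1 hq with hq | hq
    · rw [map_mul, map_mul, ihx ⟨q, hq, hqs⟩, zero_mul]
    · rw [map_mul, map_mul, ihy ⟨q, hq, hqs⟩, mul_zero]

end Words

section Graded

variable (F : Type) [Field F] {T : Type} {A : Type} [NonUnitalNonAssocSemiring A] [Module F A]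
  [SMulCommClass F A A] [IsScalarTower F A A] {n : ℕ}

def gradedVars (t : Fin n → T) : Set (ℕ × T) :=
  {p | ∃ h : p.1 < n, p.2 = t ⟨p.1, h⟩}

theorem existsUnique_forall_mem_gradedVars {w : FreeMagma (ℕ × T)}
    (hw : (mleaves w).map Prod.fst = Multiset.range n) :
    ∃! t : Fin n → T, ∀ p ∈ mleaves w, p ∈ gradedVars t := by
  have hinj : ∀ p ∈ mleaves w, ∀ q ∈ mleaves w, p.1 = q.1 → p = q :=
    Multiset.inj_on_of_nodup_map (hw ▸ Multiset.nodup_range n)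
  have hlt : ∀ p ∈ mleaves w, p.1 < n := fun p hp =>
    Multiset.mem_range.1 (hw ▸ Multiset.mem_map_of_mem _ hp)
  have hleaf : ∀ i : Fin n, ∃ p ∈ mleaves w, p.1 = i := fun i =>
    Multiset.mem_map.1 (hw ▸ Multiset.mem_range.2 i.2)
  choose leaf hleaf_mem hleaf_fst using hleaf
  refine ⟨fun i => (leaf i).2, fun q hq => ⟨hlt q hq, ?_⟩, fun t ht => funext fun i => ?_⟩
  · have hq' : q.1 < n := hlt q hq
    exact congrArg Prod.snd (hinj q hq _ (hleaf_mem ⟨q.1, hq'⟩) (hleaf_fst ⟨q.1, hq'⟩).symm)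
  · obtain ⟨h, hti⟩ := ht _ (hleaf_mem i)
    simp only [hleaf_fst] at hti
    exact hti.symm

theorem lift_eq_sum_lift_indicator_gradedVars [Fintype T] (ψ : ℕ × T → A) {f : FreeNA F T}
    (hf : f ∈ Wn F T n) :
    lift F ψ f = ∑ t : Fin n → T, lift F ((gradedVars t).indicator ψ) f := by
  induction hf using Submodule.span_induction with
  | mem x hx =>
    obtain ⟨w, hw, rfl⟩ := hx
    obtain ⟨t₀, ht₀, huniq⟩ := existsUnique_forall_mem_gradedVars hw
    rw [Finset.sum_eq_single_of_mem t₀ (Finset.mem_univ _) fun t _ ht => ?_,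
      lift_indicator_embedMonomial_of_forall_mem F ψ ht₀]
    refine lift_indicator_embedMonomial_of_exists_notMem F ψ ?_
    by_contra! hall
    exact ht (huniq t hall)
  | zero => simp only [map_zero, Finset.sum_const_zero]
  | add x y _ _ hx hy => simp only [map_add, hx, hy, Finset.sum_add_distrib]
  | smul c x _ hx => simp only [map_smul, hx, Finset.smul_sum]

/-- The monomials of multidegree `t`, with their grades forgotten. -/
def ungradedComponent (t : Fin n → T) : FreeNA F T →ₙₐ[F] FreeNA F Unit :=
  lift F ((gradedVars t).indicator fun p => of F (p.1, ()))

theorem lift_comp_ungradedComponent (t : Fin n → T) (ψ : ℕ × T → A) :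
    (lift F fun p : ℕ × Unit => if h : p.1 < n then ψ (p.1, t ⟨p.1, h⟩) else 0).comp
      (ungradedComponent F t) = lift F ((gradedVars t).indicator ψ) := by
  refine hom_ext F fun p => ?_
  simp only [NonUnitalAlgHom.comp_apply, ungradedComponent, lift_of_apply]
  by_cases hp : p ∈ gradedVars t
  · obtain ⟨h, hpt⟩ := id hp
    simp only [Set.indicator_of_mem hp, lift_of_apply, dif_pos h, ← hpt]
  · simp only [Set.indicator_of_notMem hp, map_zero]

theorem ungradedComponent_mem_Wn (t : Fin n → T) {f : FreeNA F T} (hf : f ∈ Wn F T n) :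
    ungradedComponent F t f ∈ Wn F Unit n := by
  induction hf using Submodule.span_induction with
  | mem x hx =>
    obtain ⟨w, hw, rfl⟩ := hx
    by_cases hwt : ∀ p ∈ mleaves w, p ∈ gradedVars t
    · rw [ungradedComponent, lift_indicator_embedMonomial_of_forall_mem F _ hwt,
        lift_of_comp_embedMonomial]
      refine Submodule.subset_span ⟨_, ?_, rfl⟩
      rwa [mleaves_map, Multiset.map_map]
    · push Not at hwt
      rw [ungradedComponent, lift_indicator_embedMonomial_of_exists_notMem F _ hwt]
      exact zero_mem _
  | zero => simp only [map_zero, zero_mem]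
  | add x y _ _ hx hy => simpa only [map_add] using add_mem hx hy
  | smul c x _ hx => simpa only [map_smul] using smul_mem _ c hx

theorem mem_IdGr_of_forall_ungradedComponent_mem_IdOrd [Fintype T] (comp : T → Submodule F A)
    {f : FreeNA F T} (hf : f ∈ Wn F T n)
    (h : ∀ t : Fin n → T, ungradedComponent F t f ∈ IdOrd F A) :
    f ∈ IdGr F A T comp := by
  refine Submodule.mem_iInf _ |>.2 fun ψ => LinearMap.mem_ker.2 ?_
  refine (lift_eq_sum_lift_indicator_gradedVars F _ hf).trans (Finset.sum_eq_zero fun t _ => ?_)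
  rw [← lift_comp_ungradedComponent, NonUnitalAlgHom.comp_apply]
  exact LinearMap.mem_ker.1 <|
    Submodule.mem_iInf _ |>.1 (h t) fun i => if hi : i < n then ψ.1 (i, t ⟨i, hi⟩) else 0

end Graded

end PIExp

theorem graded_codim_le_card_pow_mul_codim_general
    (F T A : Type) [Field F] [Finite T]
    [NonUnitalNonAssocRing A] [Module F A] [SMulCommClass F A A] [IsScalarTower F A A]
    (comp : T → Submodule F A) (n : ℕ) :
    PIExp.codimRank F T (PIExp.IdGr F A T comp) n ≤
      (Nat.card T : Cardinal) ^ n * PIExp.codimRank F Unit (PIExp.IdOrd F A) n := by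
  have := Fintype.ofFinite T
  let component (t : Fin n → T) : PIExp.FreeNA F T →ₗ[F] _ :=
    (PIExp.IdOrd F A).mkQ ∘ₗ
      (PIExp.ungradedComponent F t : PIExp.FreeNA F T →ₗ[F] PIExp.FreeNA F Unit)
  have hcomponent (t : Fin n → T) :
      Module.rank F ((PIExp.Wn F T n).map (component t)) ≤
        PIExp.codimRank F Unit (PIExp.IdOrd F A) n := by
    refine Submodule.rank_mono ?_
    rw [Submodule.map_comp]
    exact Submodule.map_mono (Submodule.map_le_iff_le_comap.2 fun f hf =>
      PIExp.ungradedComponent_mem_Wn F t hf)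
  calc PIExp.codimRank F T (PIExp.IdGr F A T comp) n
      ≤ Cardinal.sum fun t => Module.rank F ((PIExp.Wn F T n).map (component t)) :=
        Submodule.rank_map_le_sum_rank_map _ _ component fun f hf h =>
          (Submodule.Quotient.mk_eq_zero _).2 <|
            PIExp.mem_IdGr_of_forall_ungradedComponent_mem_IdOrd F comp hf fun t =>
              (Submodule.Quotient.mk_eq_zero _).1 (h t)
    _ ≤ Cardinal.sum fun _ : Fin n → T => PIExp.codimRank F Unit (PIExp.IdOrd F A) n :=
        Cardinal.sum_le_sum _ _ hcomponent
    _ = (Nat.card T : Cardinal) ^ n * PIExp.codimRank F Unit (PIExp.IdOrd F A) n := by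
        rw [Cardinal.sum_const', Cardinal.mk_fintype, Fintype.card_fun, Fintype.card_fin,
          Nat.card_eq_fintype_card, Nat.cast_pow]

/-- **Proposition (second part): `c_n^{T-gr}(A) ≤ |T|^n c_n(A)`**
for any algebra `A` over a field `F` graded by a finite set `T`. -/
theorem graded_codim_le_card_pow_mul_codim
    (F T A : Type) [Field F] [Finite T]
    [NonUnitalNonAssocRing A] [Module F A] [SMulCommClass F A A] [IsScalarTower F A A]
    (comp : T → Submodule F A) (hgr : PIExp.IsGrading F T A comp) (n : ℕ) :
    PIExp.codimRank F T (PIExp.IdGr F A T comp) n ≤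
      (Nat.card T : Cardinal) ^ n * PIExp.codimRank F Unit (PIExp.IdOrd F A) n :=
  graded_codim_le_card_pow_mul_codim_general F T A comp n
end
end

section
/- Let Γ: A = ⊕_{t∈T} A^{(t)} be a grading of an F-algebra A by a set T with finite support, and regard A as an algebra with the generalized F^T-action h·a = h(t)a for a ∈ A^{(t)}. Then the relatively free algebras are isomorphic as F-algebras: F{X^{T-gr}}/Id^{T-gr}(A) ≅ F{X | F^T}/Id^{F^T}(A), via the map induced by x_i^h ↦ Σ_{t ∈ supp Γ} h(t)·x_i^{(t)} with inverse induced by x_i^{(t)} ↦ x_i^{h_t}, where h_t is the indicator function of t. -/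
open Filter Finset Submodule

noncomputable section

/-! A graded substitution `x_i^{(t)} ↦ a_{i,t} ∈ A^{(t)}` and the `F^T`-substitution
`x_i ↦ Σ_t a_{i,t}` carry the same information: conversely `x_i ↦ a_i` is recovered from the
homogeneous components `h_t · a_i ∈ A^{(t)}`, whose sum over the finite support is `a_i`.
Evaluating `ξ f` at a graded substitution is evaluating `f` at the corresponding
`F^T`-substitution, and evaluating `η g` at an `F^T`-substitution is evaluating `g` at its
components. Hence `ξ` and `η` map identities to identities, and `η ∘ ξ`, `ξ ∘ η` change no
evaluation, so they are the identity modulo identities. -/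

namespace PIExp

open FreeNonUnitalNonAssocAlgebra

section Identities

variable {F A : Type} [Field F] [NonUnitalNonAssocSemiring A] [Module F A]
  [SMulCommClass F A A] [IsScalarTower F A A]

theorem mem_IdH_iff {H : Type} [Semiring H] [Module H A] {f : FreeNA F H} :
    f ∈ IdH F A H ↔ ∀ ψ : ℕ → A, lift F (fun p : ℕ × H => p.2 • ψ p.1) f = 0 := by
  simp only [IdH, Submodule.mem_iInf, LinearMap.mem_ker]
  rfl

theorem mem_IdGr_iff {T : Type} {comp : T → Submodule F A} {g : FreeNA F T} :
    g ∈ IdGr F A T comp ↔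
      ∀ ψ : ℕ × T → A, (∀ p, ψ p ∈ comp p.2) → lift F ψ g = 0 := by
  simp only [IdGr, Submodule.mem_iInf, LinearMap.mem_ker, Subtype.forall]
  rfl

end Identities

section Grading

variable {F T A : Type} [Field F] [NonUnitalNonAssocSemiring A] [Module F A]
  {comp : T → Submodule F A}

theorem exists_eq_sum_mem_of_iSup_eq_top (htotal : ⨆ t, comp t = ⊤)
    (hsupp : {t : T | comp t ≠ ⊥}.Finite) (a : A) :
    ∃ φ : T → A, (∀ t, φ t ∈ comp t) ∧ a = ∑ t ∈ hsupp.toFinset, φ t := by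
  obtain ⟨φ, hφ, rfl⟩ :=
    (Submodule.mem_iSup_iff_exists_finsupp comp a).mp (htotal ▸ Submodule.mem_top)
  refine ⟨φ, hφ, Finsupp.sum_of_support_subset φ (fun t ht => ?_) _ fun _ _ => rfl⟩
  rw [Set.Finite.mem_toFinset]
  intro hbot
  exact Finsupp.mem_support_iff.mp ht (by simpa [hbot] using hφ t)

variable [Module (T → F) A]
  (hact : ∀ (h : T → F) (t : T), ∀ a ∈ comp t, h • a = h t • a)
include hact

theorem smul_sum_of_mem {s : Finset T} {φ : T → A} (hφ : ∀ t, φ t ∈ comp t) (h : T → F) :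
    h • ∑ t ∈ s, φ t = ∑ t ∈ s, h t • φ t := by
  rw [Finset.smul_sum]
  exact Finset.sum_congr rfl fun t _ => hact h t _ (hφ t)

variable [DecidableEq T]

theorem single_smul_sum_of_mem (hsupp : {t : T | comp t ≠ ⊥}.Finite) {φ : T → A}
    (hφ : ∀ t, φ t ∈ comp t) (t : T) :
    (Pi.single t 1 : T → F) • ∑ s ∈ hsupp.toFinset, φ s = φ t := by
  rw [smul_sum_of_mem hact hφ]
  simp only [Pi.single_apply, ite_smul, one_smul, zero_smul, Finset.sum_ite_eq']
  split_ifs with ht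
  · rfl
  · have hbot : comp t = ⊥ := by simpa using ht
    exact (by simpa [hbot] using hφ t : φ t = 0).symm

theorem single_smul_mem (htotal : ⨆ t, comp t = ⊤) (hsupp : {t : T | comp t ≠ ⊥}.Finite)
    (a : A) (t : T) : (Pi.single t 1 : T → F) • a ∈ comp t := by
  obtain ⟨φ, hφ, rfl⟩ := exists_eq_sum_mem_of_iSup_eq_top htotal hsupp a
  rw [single_smul_sum_of_mem hact hsupp hφ]
  exact hφ t

theorem sum_single_smul (htotal : ⨆ t, comp t = ⊤) (hsupp : {t : T | comp t ≠ ⊥}.Finite)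
    (a : A) : ∑ t ∈ hsupp.toFinset, (Pi.single t 1 : T → F) • a = a := by
  obtain ⟨φ, hφ, rfl⟩ := exists_eq_sum_mem_of_iSup_eq_top htotal hsupp a
  exact Finset.sum_congr rfl fun t _ => single_smul_sum_of_mem hact hsupp hφ t

end Grading

section Substitutions

variable (F : Type) [Field F] {T : Type}

/-- The map `ξ : x_i^h ↦ Σ_{t ∈ s} h(t) x_i^{(t)}`. -/
def gradedOfSymbols (s : Finset T) : FreeNA F (T → F) →ₙₐ[F] FreeNA F T :=
  lift F fun p => ∑ t ∈ s, p.2 t • of F (p.1, t)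

/-- The map `η : x_i^{(t)} ↦ x_i^{h_t}`. -/
def symbolsOfGraded [DecidableEq T] : FreeNA F T →ₙₐ[F] FreeNA F (T → F) :=
  lift F fun p => of F (p.1, Pi.single p.2 1)

variable {F} {A : Type} [NonUnitalNonAssocSemiring A] [Module F A]
  [SMulCommClass F A A] [IsScalarTower F A A] [Module (T → F) A] {comp : T → Submodule F A}

theorem lift_comp_symbolsOfGraded [DecidableEq T] (ψ : ℕ → A) :
    (lift F fun p : ℕ × (T → F) => p.2 • ψ p.1).comp (symbolsOfGraded F) =
      lift F fun p : ℕ × T => (Pi.single p.2 1 : T → F) • ψ p.1 := by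
  refine FreeNonUnitalNonAssocAlgebra.hom_ext F ?_
  rintro ⟨i, t⟩
  simp [symbolsOfGraded]

variable (hact : ∀ (h : T → F) (t : T), ∀ a ∈ comp t, h • a = h t • a)
include hact

theorem lift_comp_gradedOfSymbols (s : Finset T) {ψ : ℕ × T → A}
    (hψ : ∀ p, ψ p ∈ comp p.2) :
    (lift F ψ).comp (gradedOfSymbols F s) =
      lift F fun p : ℕ × (T → F) => p.2 • ∑ t ∈ s, ψ (p.1, t) := by
  refine FreeNonUnitalNonAssocAlgebra.hom_ext F ?_
  rintro ⟨i, h⟩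
  rw [NonUnitalAlgHom.comp_apply, lift_of_apply, smul_sum_of_mem hact fun t => hψ (i, t)]
  simp [gradedOfSymbols, map_sum]

theorem gradedOfSymbols_mem_IdGr (s : Finset T) {f : FreeNA F (T → F)}
    (hf : f ∈ IdH F A (T → F)) : gradedOfSymbols F s f ∈ IdGr F A T comp := by
  rw [mem_IdGr_iff]
  intro ψ hψ
  exact (DFunLike.congr_fun (lift_comp_gradedOfSymbols hact s hψ) f).trans
    (mem_IdH_iff.mp hf fun i => ∑ t ∈ s, ψ (i, t))

theorem symbolsOfGraded_mem_IdH [DecidableEq T] (htotal : ⨆ t, comp t = ⊤)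
    (hsupp : {t : T | comp t ≠ ⊥}.Finite) {g : FreeNA F T} (hg : g ∈ IdGr F A T comp) :
    symbolsOfGraded F g ∈ IdH F A (T → F) := by
  rw [mem_IdH_iff]
  intro ψ
  exact (DFunLike.congr_fun (lift_comp_symbolsOfGraded ψ) g).trans
    (mem_IdGr_iff.mp hg _ fun p => single_smul_mem hact htotal hsupp _ _)

end Substitutions

section Inverses

variable {F T A : Type} [Field F] [DecidableEq T] [NonUnitalNonAssocRing A] [Module F A]
  [SMulCommClass F A A] [IsScalarTower F A A] [Module (T → F) A] {comp : T → Submodule F A}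
  (hact : ∀ (h : T → F) (t : T), ∀ a ∈ comp t, h • a = h t • a)
  (htotal : ⨆ t, comp t = ⊤) (hsupp : {t : T | comp t ≠ ⊥}.Finite)
include hact hsupp

include htotal in
theorem symbolsOfGraded_gradedOfSymbols_sub_mem_IdH (f : FreeNA F (T → F)) :
    symbolsOfGraded F (gradedOfSymbols F hsupp.toFinset f) - f ∈ IdH F A (T → F) := by
  rw [mem_IdH_iff]
  intro ψ
  have hcomp : ((lift F fun p : ℕ × (T → F) => p.2 • ψ p.1).comp (symbolsOfGraded F)).comp
      (gradedOfSymbols F hsupp.toFinset) = lift F fun p : ℕ × (T → F) => p.2 • ψ p.1 := by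
    rw [lift_comp_symbolsOfGraded,
      lift_comp_gradedOfSymbols hact _ fun p => single_smul_mem hact htotal hsupp _ _]
    simp only [sum_single_smul hact htotal hsupp]
  rw [map_sub, sub_eq_zero]
  exact DFunLike.congr_fun hcomp _

theorem gradedOfSymbols_symbolsOfGraded_sub_mem_IdGr (g : FreeNA F T) :
    gradedOfSymbols F hsupp.toFinset (symbolsOfGraded F g) - g ∈ IdGr F A T comp := by
  rw [mem_IdGr_iff]
  intro ψ hψ
  have hcomp : ((lift F ψ).comp (gradedOfSymbols F hsupp.toFinset)).comp (symbolsOfGraded F) =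
      lift F ψ := by
    rw [lift_comp_gradedOfSymbols hact _ hψ,
      lift_comp_symbolsOfGraded fun i => ∑ t ∈ hsupp.toFinset, ψ (i, t)]
    simp only [single_smul_sum_of_mem hact hsupp fun t => hψ (_, t)]
  rw [map_sub, sub_eq_zero]
  exact DFunLike.congr_fun hcomp _

end Inverses

end PIExp

theorem relatively_free_algebras_isomorphic_general
    (F T A : Type) [Field F] [DecidableEq T]
    [NonUnitalNonAssocRing A] [Module F A] [SMulCommClass F A A] [IsScalarTower F A A]
    [Module (T → F) A]
    (comp : T → Submodule F A)
    (htotal : (⨆ t, comp t) = ⊤)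
    (hsupp : {t : T | comp t ≠ ⊥}.Finite)
    (hact : ∀ (h : T → F) (t : T), ∀ a ∈ comp t, h • a = h t • a) :
    ∃ (ξ : PIExp.FreeNA F (T → F) →ₙₐ[F] PIExp.FreeNA F T)
      (η : PIExp.FreeNA F T →ₙₐ[F] PIExp.FreeNA F (T → F)),
      (∀ (i : ℕ) (h : T → F),
        ξ (FreeNonUnitalNonAssocAlgebra.of F (i, h)) =
          ∑ t ∈ hsupp.toFinset, h t • FreeNonUnitalNonAssocAlgebra.of F (i, t)) ∧
      (∀ (i : ℕ) (t : T),
        η (FreeNonUnitalNonAssocAlgebra.of F (i, t)) =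
          FreeNonUnitalNonAssocAlgebra.of F (i, fun s => if s = t then (1 : F) else 0)) ∧
      (∀ f ∈ PIExp.IdH F A (T → F), ξ f ∈ PIExp.IdGr F A T comp) ∧
      (∀ g ∈ PIExp.IdGr F A T comp, η g ∈ PIExp.IdH F A (T → F)) ∧
      (∀ f, η (ξ f) - f ∈ PIExp.IdH F A (T → F)) ∧
      (∀ g, ξ (η g) - g ∈ PIExp.IdGr F A T comp) := by
  refine ⟨PIExp.gradedOfSymbols F hsupp.toFinset, PIExp.symbolsOfGraded F,
    fun i h => FreeNonUnitalNonAssocAlgebra.lift_of_apply _ _ _,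
    fun i t => ?_,
    fun f => PIExp.gradedOfSymbols_mem_IdGr hact _,
    fun g => PIExp.symbolsOfGraded_mem_IdH hact htotal hsupp,
    PIExp.symbolsOfGraded_gradedOfSymbols_sub_mem_IdH hact htotal hsupp,
    PIExp.gradedOfSymbols_symbolsOfGraded_sub_mem_IdGr hact hsupp⟩
  simp only [PIExp.symbolsOfGraded, FreeNonUnitalNonAssocAlgebra.lift_of_apply]
  congr 2
  exact funext fun s => Pi.single_apply t 1 s

/-- **Lemma (the relatively free algebras coincide).**
For a grading `Γ : A = ⊕_{t∈T} A^{(t)}` with finite support, regarded as a generalized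
`F^T`-action, the algebras `F{X^{T-gr}}/Id^{T-gr}(A)` and `F{X|F^T}/Id^{F^T}(A)` are isomorphic
via the mutually inverse maps induced by `ξ : x_i^h ↦ Σ_{t ∈ supp Γ} h(t) x_i^{(t)}` and
`η : x_i^{(t)} ↦ x_i^{h_t}` (here expressed by: `ξ`, `η` map identities to identities and are
mutually inverse modulo the ideals of identities). -/
theorem relatively_free_algebras_isomorphic
    (F T A : Type) [Field F] [DecidableEq T]
    [NonUnitalNonAssocRing A] [Module F A] [SMulCommClass F A A] [IsScalarTower F A A]
    [Module (T → F) A]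
    (comp : T → Submodule F A)
    (hindep : iSupIndep comp) (htotal : (⨆ t, comp t) = ⊤)
    (hmul : ∀ s t : T, ∃ r : T, ∀ a ∈ comp s, ∀ b ∈ comp t, a * b ∈ comp r)
    (hsupp : {t : T | comp t ≠ ⊥}.Finite)
    (hact : ∀ (h : T → F) (t : T), ∀ a ∈ comp t, h • a = h t • a) :
    ∃ (ξ : PIExp.FreeNA F (T → F) →ₙₐ[F] PIExp.FreeNA F T)
      (η : PIExp.FreeNA F T →ₙₐ[F] PIExp.FreeNA F (T → F)),
      (∀ (i : ℕ) (h : T → F),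
        ξ (FreeNonUnitalNonAssocAlgebra.of F (i, h)) =
          ∑ t ∈ hsupp.toFinset, h t • FreeNonUnitalNonAssocAlgebra.of F (i, t)) ∧
      (∀ (i : ℕ) (t : T),
        η (FreeNonUnitalNonAssocAlgebra.of F (i, t)) =
          FreeNonUnitalNonAssocAlgebra.of F (i, fun s => if s = t then (1 : F) else 0)) ∧
      (∀ f ∈ PIExp.IdH F A (T → F), ξ f ∈ PIExp.IdGr F A T comp) ∧
      (∀ g ∈ PIExp.IdGr F A T comp, η g ∈ PIExp.IdH F A (T → F)) ∧
      (∀ f, η (ξ f) - f ∈ PIExp.IdH F A (T → F)) ∧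
      (∀ g, ξ (η g) - g ∈ PIExp.IdGr F A T comp) :=
  relatively_free_algebras_isomorphic_general F T A comp htotal hsupp hact
end
end
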